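/- arXiv:1505.00717 — 5 statements merged into one kernel-verified Lean document; each statement's English description precedes it below -/
import Mathlib

section
/- If A is a commutative differential graded algebra equipped with a second (weight) grading A = ⊕_q A_q^• compatible with the product (A_q^k · A_{q'}^{k'} ⊆ A_{q+q'}^{k+k'}) and preserved by the differential (d : A_q^k → A_q^{k+1}), and if A_k^{k+1} = 0 for all k, then the collection C^k = coker(d : A_k^{k-1} → A_k^k) carries a natural cdga structure with zero differential such that the projection A → C is a morphism of cdga's. -/
/-!
On the weight diagonal `𝒜 k k` the differential vanishes, since it lands in `𝒜 k (k + 1) = 0`.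
Hence by the Leibniz rule a boundary times a diagonal element is again a boundary,
`D a * y = D (a * y)` and `x * D b = ± D (x * b)`, so the boundaries `D (𝒜 k (k - 1))` form an
ideal in the diagonal subalgebra and the product descends to the cokernels.
-/

namespace Submodule

variable {R A : Type*} [CommSemiring R] [Semiring A] [Algebra R A]

def mulRestrict (p q r : Submodule R A) (h : ∀ x ∈ p, ∀ y ∈ q, x * y ∈ r) :
    p →ₗ[R] q →ₗ[R] r :=
  LinearMap.mk₂ R (fun x y => ⟨x * y, h x x.2 y y.2⟩)
    (fun _ _ _ => Subtype.ext (add_mul _ _ _))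
    (fun _ _ _ => Subtype.ext (smul_mul_assoc _ _ _))
    (fun _ _ _ => Subtype.ext (mul_add _ _ _))
    (fun _ _ _ => Subtype.ext (mul_smul_comm _ _ _))

end Submodule

namespace BigradedDGA

variable {K A : Type*} [Field K] [Ring A] [Algebra K A]

/-- `𝒜 q k` is the piece of weight `q` and degree `k`. -/
structure IsGradedDerivation (𝒜 : ℤ → ℤ → Submodule K A) (D : A →ₗ[K] A) : Prop where
  mul_mem : ∀ (q q' k k' : ℤ), ∀ x ∈ 𝒜 q k, ∀ y ∈ 𝒜 q' k', x * y ∈ 𝒜 (q + q') (k + k')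
  map_mem : ∀ (q k : ℤ), ∀ x ∈ 𝒜 q k, D x ∈ 𝒜 q (k + 1)
  map_mul : ∀ (q q' k k' : ℤ), ∀ x ∈ 𝒜 q k, ∀ y ∈ 𝒜 q' k',
    D (x * y) = D x * y + ((-1 : K) ^ k) • (x * D y)

def diagBoundaries (𝒜 : ℤ → ℤ → Submodule K A) (D : A →ₗ[K] A) (k : ℤ) : Submodule K (𝒜 k k) :=
  Submodule.comap (𝒜 k k).subtype ((𝒜 k (k - 1)).map D)

variable {𝒜 : ℤ → ℤ → Submodule K A} {D : A →ₗ[K] A} (h : IsGradedDerivation 𝒜 D)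
include h

theorem D_mul_mem_map_of_D_eq_zero {q q' k k' : ℤ} {a y : A} (ha : a ∈ 𝒜 q k)
    (hy : y ∈ 𝒜 q' k') (hDy : D y = 0) : D a * y ∈ (𝒜 (q + q') (k + k')).map D :=
  ⟨a * y, h.mul_mem q q' k k' a ha y hy, by simp [h.map_mul q q' k k' a ha y hy, hDy]⟩

theorem mul_D_mem_map_of_D_eq_zero {q q' k k' : ℤ} {x b : A} (hx : x ∈ 𝒜 q k)
    (hb : b ∈ 𝒜 q' k') (hDx : D x = 0) : x * D b ∈ (𝒜 (q + q') (k + k')).map D := by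
  refine ⟨((-1 : K) ^ k) • (x * b), Submodule.smul_mem _ _ (h.mul_mem q q' k k' x hx b hb), ?_⟩
  rw [map_smul, h.map_mul q q' k k' x hx b hb, hDx, zero_mul, zero_add, smul_smul, ← mul_zpow]
  simp

variable (hvanish : ∀ k : ℤ, 𝒜 k (k + 1) = ⊥)
include hvanish

theorem D_eq_zero_of_mem_diag {k : ℤ} {x : A} (hx : x ∈ 𝒜 k k) : D x = 0 := by
  simpa [hvanish k] using h.map_mem k k x hx

theorem mul_mem_diagBoundaries_left {k k' : ℤ} {x : 𝒜 k k} (hx : x ∈ diagBoundaries 𝒜 D k)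
    (y : 𝒜 k' k') :
    Submodule.mulRestrict _ _ _ (h.mul_mem k k' k k') x y ∈ diagBoundaries 𝒜 D (k + k') := by
  obtain ⟨a, ha, hax⟩ := hx
  have := D_mul_mem_map_of_D_eq_zero h ha y.2 (D_eq_zero_of_mem_diag h hvanish y.2)
  rw [hax, show k - 1 + k' = k + k' - 1 by ring] at this
  exact this

theorem mul_mem_diagBoundaries_right {k k' : ℤ} (x : 𝒜 k k) {y : 𝒜 k' k'}
    (hy : y ∈ diagBoundaries 𝒜 D k') :
    Submodule.mulRestrict _ _ _ (h.mul_mem k k' k k') x y ∈ diagBoundaries 𝒜 D (k + k') := by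
  obtain ⟨b, hb, hby⟩ := hy
  have := mul_D_mem_map_of_D_eq_zero h x.2 hb (D_eq_zero_of_mem_diag h hvanish x.2)
  rw [hby, ← add_sub_assoc] at this
  exact this

/-- The product on `C^k = 𝒜 k k ⧸ D (𝒜 k (k - 1))`. -/
def diagCokerMul (k k' : ℤ) :
    (𝒜 k k ⧸ diagBoundaries 𝒜 D k) →ₗ[K] (𝒜 k' k' ⧸ diagBoundaries 𝒜 D k') →ₗ[K]
      (𝒜 (k + k') (k + k') ⧸ diagBoundaries 𝒜 D (k + k')) :=
  ((Submodule.mulRestrict _ _ _ (h.mul_mem k k' k k')).compr₂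
      (diagBoundaries 𝒜 D (k + k')).mkQ).liftQ₂ _ _
    (fun _ hx => LinearMap.ext fun y => (Submodule.Quotient.mk_eq_zero _).2 <|
      mul_mem_diagBoundaries_left h hvanish hx y)
    (fun _ hy => LinearMap.ext fun x => (Submodule.Quotient.mk_eq_zero _).2 <|
      mul_mem_diagBoundaries_right h hvanish x hy)

end BigradedDGA

theorem stmt_0_general
    (A : Type) [Ring A] [Algebra ℚ A]
    (𝒜 : ℤ → ℤ → Submodule ℚ A)
    (hmul : ∀ (q q' k k' : ℤ), ∀ x ∈ 𝒜 q k, ∀ y ∈ 𝒜 q' k',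
      x * y ∈ 𝒜 (q + q') (k + k'))
    (D : A →ₗ[ℚ] A)
    (hD : ∀ (q k : ℤ), ∀ x ∈ 𝒜 q k, D x ∈ 𝒜 q (k + 1))
    (hleib : ∀ (q q' k k' : ℤ), ∀ x ∈ 𝒜 q k, ∀ y ∈ 𝒜 q' k',
      D (x * y) = D x * y + ((-1 : ℚ) ^ k) • (x * D y))
    (hvanish : ∀ k : ℤ, 𝒜 k (k + 1) = ⊥) :
    ∃ m : ∀ k k' : ℤ,
      (↥(𝒜 k k) ⧸ (Submodule.comap (𝒜 k k).subtype ((𝒜 k (k - 1)).map D))) →ₗ[ℚ]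
      (↥(𝒜 k' k') ⧸ (Submodule.comap (𝒜 k' k').subtype ((𝒜 k' (k' - 1)).map D))) →ₗ[ℚ]
      (↥(𝒜 (k + k') (k + k')) ⧸
        (Submodule.comap (𝒜 (k + k') (k + k')).subtype ((𝒜 (k + k') (k + k' - 1)).map D))),
      -- the projection is an algebra morphism:
      (∀ (k k' : ℤ) (x : 𝒜 k k) (y : 𝒜 k' k'),
        m k k' (Submodule.Quotient.mk x) (Submodule.Quotient.mk y)
          = Submodule.Quotient.mk
              ⟨(x : A) * (y : A), hmul k k' k k' x x.2 y y.2⟩) ∧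
      -- the differential of `C` is zero and the projection is a morphism of
      -- complexes: the projection of `D x` vanishes in `C`:
      (∀ (k : ℤ) (x : A) (hx : x ∈ 𝒜 (k + 1) k),
        (Submodule.Quotient.mk (⟨D x, hD (k + 1) k x hx⟩ : 𝒜 (k + 1) (k + 1)) :
          ↥(𝒜 (k + 1) (k + 1)) ⧸ (Submodule.comap (𝒜 (k + 1) (k + 1)).subtype
            ((𝒜 (k + 1) (k + 1 - 1)).map D))) = 0) := by
  refine ⟨BigradedDGA.diagCokerMul ⟨hmul, hD, hleib⟩ hvanish, fun _ _ _ _ => rfl, fun k x hx => ?_⟩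
  exact (Submodule.Quotient.mk_eq_zero _).2 ⟨x, by rwa [add_sub_cancel_right], rfl⟩

/-- let `A` be a cdga over ℚ with a second (weight) grading
`𝒜 q k` (weight `q`, cohomological degree `k`) compatible with the product
(`𝒜 q k · 𝒜 q' k' ⊆ 𝒜 (q+q') (k+k')`) and preserved by the differential
(`D(𝒜 q k) ⊆ 𝒜 q (k+1)`), satisfying graded commutativity and the graded
Leibniz rule.  If `𝒜 k (k+1) = 0` for all `k`, then the collection
`C^k = coker(D : 𝒜 k (k-1) → 𝒜 k k)` carries a product making it a cdga with
zero differential such that the projection `A → C` (projection onto the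
weight-diagonal components followed by the quotient maps) is a morphism of
cdga's: the product of `C` is induced by the product of `A` through the
projection, and the projection kills the differential. -/
theorem stmt_0
    (A : Type) [Ring A] [Algebra ℚ A]
    (𝒜 : ℤ → ℤ → Submodule ℚ A)
    (hmul : ∀ (q q' k k' : ℤ), ∀ x ∈ 𝒜 q k, ∀ y ∈ 𝒜 q' k',
      x * y ∈ 𝒜 (q + q') (k + k'))
    (hcomm : ∀ (q q' k k' : ℤ), ∀ x ∈ 𝒜 q k, ∀ y ∈ 𝒜 q' k',
      x * y = ((-1 : ℚ) ^ (k * k')) • (y * x))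
    (D : A →ₗ[ℚ] A)
    (hD : ∀ (q k : ℤ), ∀ x ∈ 𝒜 q k, D x ∈ 𝒜 q (k + 1))
    (hDD : ∀ x : A, D (D x) = 0)
    (hleib : ∀ (q q' k k' : ℤ), ∀ x ∈ 𝒜 q k, ∀ y ∈ 𝒜 q' k',
      D (x * y) = D x * y + ((-1 : ℚ) ^ k) • (x * D y))
    (hvanish : ∀ k : ℤ, 𝒜 k (k + 1) = ⊥) :
    ∃ m : ∀ k k' : ℤ,
      (↥(𝒜 k k) ⧸ (Submodule.comap (𝒜 k k).subtype ((𝒜 k (k - 1)).map D))) →ₗ[ℚ]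
      (↥(𝒜 k' k') ⧸ (Submodule.comap (𝒜 k' k').subtype ((𝒜 k' (k' - 1)).map D))) →ₗ[ℚ]
      (↥(𝒜 (k + k') (k + k')) ⧸
        (Submodule.comap (𝒜 (k + k') (k + k')).subtype ((𝒜 (k + k') (k + k' - 1)).map D))),
      -- the projection is an algebra morphism:
      (∀ (k k' : ℤ) (x : 𝒜 k k) (y : 𝒜 k' k'),
        m k k' (Submodule.Quotient.mk x) (Submodule.Quotient.mk y)
          = Submodule.Quotient.mk
              ⟨(x : A) * (y : A), hmul k k' k k' x x.2 y y.2⟩) ∧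
      -- the differential of `C` is zero and the projection is a morphism of
      -- complexes: the projection of `D x` vanishes in `C`:
      (∀ (k : ℤ) (x : A) (hx : x ∈ 𝒜 (k + 1) k),
        (Submodule.Quotient.mk (⟨D x, hD (k + 1) k x hx⟩ : 𝒜 (k + 1) (k + 1)) :
          ↥(𝒜 (k + 1) (k + 1)) ⧸ (Submodule.comap (𝒜 (k + 1) (k + 1)).subtype
            ((𝒜 (k + 1) (k + 1 - 1)).map D))) = 0) :=
  stmt_0_general A 𝒜 hmul D hD hleib hvanish
end

section
/- If A is a bigraded cdga as above with A_{2k}^{k-1} = 0 for all k, then the collection K^k = ker(d : A_{2k}^k → A_{2k}^{k+1}) is a subalgebra of A closed under the product, carries a cdga structure with zero differential, and the inclusion K → A is a morphism of cdga's. -/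
theorem stmt_1_general
    (A : Type) [Ring A] [Algebra ℚ A]
    (𝒜 : ℤ → ℤ → Submodule ℚ A)
    (hmul : ∀ (q q' k k' : ℤ), ∀ x ∈ 𝒜 q k, ∀ y ∈ 𝒜 q' k',
      x * y ∈ 𝒜 (q + q') (k + k'))
    (D : A →ₗ[ℚ] A)
    (hleib : ∀ (q q' k k' : ℤ), ∀ x ∈ 𝒜 q k, ∀ y ∈ 𝒜 q' k',
      D (x * y) = D x * y + ((-1 : ℚ) ^ k) • (x * D y)) :
    ∀ (k k' : ℤ), ∀ x ∈ 𝒜 (2 * k) k, ∀ y ∈ 𝒜 (2 * k') k',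
      D x = 0 → D y = 0 →
        x * y ∈ 𝒜 (2 * (k + k')) (k + k') ∧ D (x * y) = 0 := by
  intro k k' x hx y hy hDx hDy
  refine ⟨?_, ?_⟩
  · simpa only [mul_add] using hmul _ _ _ _ x hx y hy
  · rw [hleib _ _ _ _ x hx y hy, hDx, hDy, zero_mul, mul_zero, smul_zero, add_zero]

/-- let `A` be a cdga over ℚ with a weight grading `𝒜 q k`
(weight `q`, cohomological degree `k`) compatible with the product and the
differential, and such that `𝒜 (2k) (k-1) = 0` for all `k`.  Then the
collection `K^k = ker(D : 𝒜 (2k) k → 𝒜 (2k) (k+1))` is closed under the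
product (landing in `K^{k+k'}`), carries a cdga structure with zero
differential (the differential of `A` vanishes on `K` by definition), and the
inclusion `K → A` is a morphism of cdga's. -/
theorem stmt_1
    (A : Type) [Ring A] [Algebra ℚ A]
    (𝒜 : ℤ → ℤ → Submodule ℚ A)
    (hmul : ∀ (q q' k k' : ℤ), ∀ x ∈ 𝒜 q k, ∀ y ∈ 𝒜 q' k',
      x * y ∈ 𝒜 (q + q') (k + k'))
    (hcomm : ∀ (q q' k k' : ℤ), ∀ x ∈ 𝒜 q k, ∀ y ∈ 𝒜 q' k',
      x * y = ((-1 : ℚ) ^ (k * k')) • (y * x))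
    (D : A →ₗ[ℚ] A)
    (hD : ∀ (q k : ℤ), ∀ x ∈ 𝒜 q k, D x ∈ 𝒜 q (k + 1))
    (hDD : ∀ x : A, D (D x) = 0)
    (hleib : ∀ (q q' k k' : ℤ), ∀ x ∈ 𝒜 q k, ∀ y ∈ 𝒜 q' k',
      D (x * y) = D x * y + ((-1 : ℚ) ^ k) • (x * D y))
    (hvanish : ∀ k : ℤ, 𝒜 (2 * k) (k - 1) = ⊥) :
    ∀ (k k' : ℤ), ∀ x ∈ 𝒜 (2 * k) k, ∀ y ∈ 𝒜 (2 * k') k',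
      D x = 0 → D y = 0 →
        x * y ∈ 𝒜 (2 * (k + k')) (k + k') ∧ D (x * y) = 0 :=
  stmt_1_general A 𝒜 hmul D hleib
end

section
/- Let A be a bigraded cdga with A_k^{k+1} = 0 for all k, and suppose that for every k ≤ r+1 and every q ≠ k one has H^k(A_q^•) = 0. Then the projection A → C, where C^k = coker(d : A_k^{k-1} → A_k^k) with zero differential, induces an isomorphism H^i(A) → H^i(C) for all i ≤ r and an injection for i = r+1 (i.e. it is an r-quasi-isomorphism). -/
/-- let `A` be a bigraded cdga (`V q k` is the weight-`q`,
degree-`k` piece; the differential `d` preserves weights and the product adds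
bidegrees) with `A_k^{k+1} = 0` for all `k`, and suppose `H^k(A_q^•) = 0`
for every `k ≤ r+1` and `q ≠ k`.  Then the projection `A → C` onto
`C^k = coker(d : A_k^{k-1} → A_k^k)` (with zero differential) is an
`r`-quasi-isomorphism: it kills boundaries (first clause), is injective on
cohomology in degrees `≤ r+1` (second clause) and surjective on cohomology in
degrees `≤ r` (third clause).  The total complex in degree `k` is
`⨁ q, V q k`, with differential induced componentwise, and the projection at
degree `k` is (component of weight `k`) followed by the quotient map. -/
theorem stmt_2
    (r : WithTop ℤ) (hr : 0 ≤ r)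
    (V : ℤ → ℤ → Type) [∀ q k, AddCommGroup (V q k)] [∀ q k, Module ℚ (V q k)]
    (d : ∀ q k : ℤ, V q k →ₗ[ℚ] V q (k + 1))
    (mul : ∀ q q' k k' : ℤ, V q k →ₗ[ℚ] V q' k' →ₗ[ℚ] V (q + q') (k + k'))
    (hdd : ∀ (q k : ℤ) (x : V q k), d q (k + 1) (d q k x) = 0)
    (hvanish : ∀ k : ℤ, ∀ x : V k (k + 1), x = 0)
    (hacyclic : ∀ q k : ℤ, q ≠ k + 1 → ((k + 1 : ℤ) : WithTop ℤ) ≤ r + 1 →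
      ∀ x : V q (k + 1), d q (k + 1) x = 0 → ∃ y : V q k, d q k y = x) :
    -- the projection kills boundaries (it is a map of complexes to (C, 0)):
    (∀ (k : ℤ) (y : Π₀ q : ℤ, V q k),
      (LinearMap.range (d (k + 1) k)).mkQ
        ((DFinsupp.mapRange.linearMap (fun q => d q k) y) (k + 1)) = 0) ∧
    -- injectivity on cohomology in degrees ≤ r + 1:
    (∀ k : ℤ, ((k + 1 : ℤ) : WithTop ℤ) ≤ r + 1 →
      ∀ x : Π₀ q : ℤ, V q (k + 1),
        DFinsupp.mapRange.linearMap (fun q => d q (k + 1)) x = 0 →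
        (LinearMap.range (d (k + 1) k)).mkQ (x (k + 1)) = 0 →
        ∃ y : Π₀ q : ℤ, V q k,
          DFinsupp.mapRange.linearMap (fun q => d q k) y = x) ∧
    -- surjectivity on cohomology in degrees ≤ r:
    (∀ k : ℤ, ((k + 1 : ℤ) : WithTop ℤ) ≤ r →
      ∀ c : V (k + 1) (k + 1), ∃ x : Π₀ q : ℤ, V q (k + 1),
        DFinsupp.mapRange.linearMap (fun q => d q (k + 1)) x = 0 ∧
        (LinearMap.range (d (k + 1) k)).mkQ (x (k + 1)) =
          (LinearMap.range (d (k + 1) k)).mkQ c) := by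
  refine ⟨?_, ?_, ?_⟩
  · intro k y
    rw [Submodule.mkQ_apply, Submodule.Quotient.mk_eq_zero]
    simp only [DFinsupp.mapRange.linearMap_apply, DFinsupp.mapRange_apply]
    exact ⟨y (k + 1), rfl⟩
  · intro k hk x hclosed hx
    classical
    have hsurj : ∀ q : ℤ, ∃ y : V q k, d q k y = x q := by
      intro q
      by_cases hq : q = k + 1
      · subst hq
        rw [Submodule.mkQ_apply, Submodule.Quotient.mk_eq_zero] at hx
        exact hx
      · have hdx : d q (k + 1) (x q) = 0 := by
          have := congrArg (fun z => z q) hclosed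
          simpa [DFinsupp.mapRange_apply] using this
        exact hacyclic q k hq hk (x q) hdx
    set g : ∀ q : ℤ, V q k := fun q => Classical.choose (hsurj q) with hg
    have hgd : ∀ q, d q k (g q) = x q := fun q => Classical.choose_spec (hsurj q)
    refine ⟨DFinsupp.mk x.support (fun q => g q), ?_⟩
    ext q
    simp only [DFinsupp.mapRange.linearMap_apply, DFinsupp.mapRange_apply,
      DFinsupp.mk_apply]
    by_cases hq : q ∈ x.support
    · rw [dif_pos hq]; exact hgd q
    · rw [dif_neg hq, map_zero]
      exact (not_not.mp (fun h => hq (DFinsupp.mem_support_iff.mpr h))).symm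
  · intro k _ c
    refine ⟨DFinsupp.single (k + 1) c, ?_, ?_⟩
    · ext q
      simp only [DFinsupp.mapRange.linearMap_apply, DFinsupp.mapRange_apply,
        DFinsupp.zero_apply]
      by_cases hq : q = k + 1
      · subst hq
        simp only [DFinsupp.single_eq_same]
        exact hvanish (k + 1) _
      · simp [DFinsupp.single_eq_of_ne hq]
    · simp
end

section
/- Let A be a bigraded cdga with A_{2k}^{k-1} = 0 for all k, and suppose that for every k ≤ r and every q ≠ 2k one has H^k(A_q^•) = 0. Then the inclusion K → A, where K^k = ker(d : A_{2k}^k → A_{2k}^{k+1}) with zero differential, induces an injection H^i(K) → H^i(A) for every i and an isomorphism for i ≤ r. -/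
/-!
The differential preserves weight, so the total complex is the direct sum of the weight-`q`
complexes `A_q^•`. Injectivity: a boundary lying in weight `2k` and degree `k` is the image of an
element of `A_{2k}^{k-1} = 0`. Surjectivity in degrees `≤ r`: every weight component of a cocycle
other than the weight-`2k` one is exact, so the cocycle differs from that component, an element
of `K`, by a boundary.
-/

namespace DFinsupp

variable {ι R : Type*} [Semiring R] {M N : ι → Type*}
  [∀ i, AddCommMonoid (M i)] [∀ i, Module R (M i)]
  [∀ i, AddCommMonoid (N i)] [∀ i, Module R (N i)]

theorem mapRange_linearMap_eq_zero_iff {f : ∀ i, M i →ₗ[R] N i} {x : Π₀ i, M i} :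
    mapRange.linearMap f x = 0 ↔ ∀ i, f i (x i) = 0 := by
  simp [DFinsupp.ext_iff]

theorem mem_range_mapRange_linearMap {f : ∀ i, M i →ₗ[R] N i} {x : Π₀ i, N i}
    (hx : ∀ i, x i ∈ LinearMap.range (f i)) :
    x ∈ LinearMap.range (mapRange.linearMap f) := by
  classical
  rw [← sum_single (f := x)]
  refine Submodule.dfinsuppSum_mem _ _ _ fun i _ => ?_
  obtain ⟨y, hy⟩ := hx i
  exact ⟨single i y, by simp [hy]⟩

theorem eq_zero_of_mapRange_linearMap_eq_single [DecidableEq ι] {f : ∀ i, M i →ₗ[R] N i} {i : ι}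
    [Subsingleton (M i)] {y : Π₀ i, M i} {x : N i}
    (h : mapRange.linearMap f y = single i x) : x = 0 := by
  have := DFunLike.congr_fun h i
  simp only [mapRange.linearMap_apply, mapRange_apply, single_eq_same] at this
  rw [← this, Subsingleton.elim (y i) 0, map_zero]

end DFinsupp

theorem stmt_3_general
    (r : WithTop ℤ)
    (V : ℤ → ℤ → Type) [∀ q k, AddCommGroup (V q k)] [∀ q k, Module ℚ (V q k)]
    (d : ∀ q k : ℤ, V q k →ₗ[ℚ] V q (k + 1))
    (hvanish : ∀ k : ℤ, ∀ x : V (2 * k) (k - 1), x = 0)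
    (hacyclic : ∀ q k : ℤ, q ≠ 2 * (k + 1) → ((k + 1 : ℤ) : WithTop ℤ) ≤ r →
      ∀ x : V q (k + 1), d q (k + 1) x = 0 → ∃ y : V q k, d q k y = x) :
    -- injectivity on cohomology in every degree:
    (∀ (k : ℤ) (x : V (2 * (k + 1)) (k + 1)), d (2 * (k + 1)) (k + 1) x = 0 →
      (∃ y : Π₀ q : ℤ, V q k,
        DFinsupp.mapRange.linearMap (fun q => d q k) y
          = DFinsupp.single (β := fun q => V q (k + 1)) (2 * (k + 1)) x) → x = 0) ∧
    -- surjectivity on cohomology in degrees ≤ r: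
    (∀ k : ℤ, ((k + 1 : ℤ) : WithTop ℤ) ≤ r →
      ∀ x : Π₀ q : ℤ, V q (k + 1),
        DFinsupp.mapRange.linearMap (fun q => d q (k + 1)) x = 0 →
        ∃ z : V (2 * (k + 1)) (k + 1), d (2 * (k + 1)) (k + 1) z = 0 ∧
          ∃ y : Π₀ q : ℤ, V q k,
            DFinsupp.mapRange.linearMap (fun q => d q k) y
              = x - DFinsupp.single (β := fun q => V q (k + 1)) (2 * (k + 1)) z) := by
  refine ⟨fun k x _ ⟨y, hy⟩ => ?_, fun k hk x hx => ?_⟩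
  · have hzero := hvanish (k + 1)
    rw [add_sub_cancel_right] at hzero
    have : Subsingleton (V (2 * (k + 1)) k) := subsingleton_of_forall_eq 0 hzero
    exact DFinsupp.eq_zero_of_mapRange_linearMap_eq_single (i := 2 * (k + 1)) hy
  · have hcocycle := DFinsupp.mapRange_linearMap_eq_zero_iff.mp hx
    refine ⟨x (2 * (k + 1)), hcocycle _, ?_⟩
    rw [← DFinsupp.erase_eq_sub_single]
    refine DFinsupp.mem_range_mapRange_linearMap fun q => ?_
    by_cases hq : q = 2 * (k + 1)
    · simp [hq]
    · rw [DFinsupp.erase_ne hq]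
      exact hacyclic q k hq hk (x q) (hcocycle q)

/-- let `A` be a bigraded cdga (`V q k` is the weight-`q`,
degree-`k` piece) with `A_{2k}^{k-1} = 0` for all `k`, and suppose
`H^k(A_q^•) = 0` for every `k ≤ r` and `q ≠ 2k`.  Then the inclusion
`K → A`, where `K^k = ker(d : A_{2k}^k → A_{2k}^{k+1})` with zero
differential, induces an injection `H^i(K) → H^i(A)` for every `i` (first
clause: an element of `K` which is a boundary in the total complex is zero)
and an isomorphism for `i ≤ r` (second clause: every cohomology class of the
total complex is represented, modulo boundaries, by a cocycle in `K`).
The total complex in degree `k` is `⨁ q, V q k`, and the inclusion of `K^k`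
is `DFinsupp.single (2k)`. -/
theorem stmt_3
    (r : WithTop ℤ) (hr : 0 ≤ r)
    (V : ℤ → ℤ → Type) [∀ q k, AddCommGroup (V q k)] [∀ q k, Module ℚ (V q k)]
    (d : ∀ q k : ℤ, V q k →ₗ[ℚ] V q (k + 1))
    (mul : ∀ q q' k k' : ℤ, V q k →ₗ[ℚ] V q' k' →ₗ[ℚ] V (q + q') (k + k'))
    (hdd : ∀ (q k : ℤ) (x : V q k), d q (k + 1) (d q k x) = 0)
    (hvanish : ∀ k : ℤ, ∀ x : V (2 * k) (k - 1), x = 0)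
    (hacyclic : ∀ q k : ℤ, q ≠ 2 * (k + 1) → ((k + 1 : ℤ) : WithTop ℤ) ≤ r →
      ∀ x : V q (k + 1), d q (k + 1) x = 0 → ∃ y : V q k, d q k y = x) :
    -- injectivity on cohomology in every degree:
    (∀ (k : ℤ) (x : V (2 * (k + 1)) (k + 1)), d (2 * (k + 1)) (k + 1) x = 0 →
      (∃ y : Π₀ q : ℤ, V q k,
        DFinsupp.mapRange.linearMap (fun q => d q k) y
          = DFinsupp.single (β := fun q => V q (k + 1)) (2 * (k + 1)) x) → x = 0) ∧
    -- surjectivity on cohomology in degrees ≤ r: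
    (∀ k : ℤ, ((k + 1 : ℤ) : WithTop ℤ) ≤ r →
      ∀ x : Π₀ q : ℤ, V q (k + 1),
        DFinsupp.mapRange.linearMap (fun q => d q (k + 1)) x = 0 →
        ∃ z : V (2 * (k + 1)) (k + 1), d (2 * (k + 1)) (k + 1) z = 0 ∧
          ∃ y : Π₀ q : ℤ, V q k,
            DFinsupp.mapRange.linearMap (fun q => d q k) y
              = x - DFinsupp.single (β := fun q => V q (k + 1)) (2 * (k + 1)) z) :=
  stmt_3_general r V d hvanish hacyclic
end

section
/- Define on the bigraded space M_q^k = ⊕_{|I| = q−k} H^{2k−q}(D_I) the product μ(x ⊗ x') = 0 if I ∩ I' ≠ ∅ and μ(x ⊗ x') = (−1)^{(q−n)q'} sgn(I,I') · restriction of x times restriction of x' otherwise, where the grading of x ∈ H^{2n−q}(D_I) is (n,q). Then μ is graded-commutative: μ(x' ⊗ x) = (−1)^{n n'} μ(x ⊗ x'), assuming the cup products on each H^•(D_J) are graded-commutative and restrictions are ring homomorphisms. -/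
/-!
Restriction to `I ∪ I'` turns the product into a product of two elements of degrees
`2n - q` and `2n' - q'` in a single graded-commutative algebra, so swapping the factors
costs `(-1)^{(2n-q)(2n'-q')}`. Swapping the disjoint index sets changes the shuffle sign by
`(-1)^{|I||I'|}`, since every pair `(i, i') ∈ I × I'` is an inversion for exactly one of
the two orders. Modulo 2 the resulting exponents agree with those of `(-1)^{nn'}`.
-/

/-- The shuffle sign `sgn(I, I')` of two disjoint finite sets of naturals (as a
rational number): `(-1)` raised to the number of pairs `(i, i') ∈ I × I'` with
`i' < i`, which is the sign of the permutation sorting the concatenation of the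
increasing listings of `I` and `I'` into increasing order. -/
def shuffleSignQ (I I' : Finset ℕ) : ℚ :=
  (-1) ^ (∑ i ∈ I, (I'.filter (· < i)).card)

open Finset

lemma card_filter_lt_add_card_filter_gt {α : Type*} [LinearOrder α] {s : Finset α} {i : α}
    (hi : i ∉ s) :
    #(s.filter (· < i)) + #(s.filter (i < ·)) = #s := by
  rw [← card_filter_add_card_filter_not (s := s) (· < i)]
  congr 2
  refine filter_congr fun j hj => ?_
  have hne : i ≠ j := fun h => hi (h ▸ hj)
  rw [not_lt, le_iff_lt_or_eq, or_iff_left hne]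

lemma sum_card_filter_lt_add_sum_card_filter_lt {α : Type*} [LinearOrder α] {I I' : Finset α}
    (h : Disjoint I I') :
    ∑ i ∈ I, #(I'.filter (· < i)) + ∑ i' ∈ I', #(I.filter (· < i')) = #I * #I' := by
  have hswap : ∑ i' ∈ I', #(I.filter (· < i')) = ∑ i ∈ I, #(I'.filter (i < ·)) := by
    simp only [card_filter]
    exact sum_comm
  rw [hswap, ← sum_add_distrib,
    sum_congr rfl fun i hi => card_filter_lt_add_card_filter_gt (disjoint_left.mp h hi),
    sum_const, smul_eq_mul]

lemma shuffleSignQ_swap {I I' : Finset ℕ} (h : Disjoint I I') :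
    shuffleSignQ I' I = (-1 : ℚ) ^ ((#I : ℤ) * #I') * shuffleSignQ I I' := by
  have hsq : ∀ k : ℕ, (-1 : ℚ) ^ k * (-1) ^ k = 1 := fun k => by
    rw [← pow_add, ← two_mul, pow_mul, neg_one_sq, one_pow]
  unfold shuffleSignQ
  rw [← Nat.cast_mul, zpow_natCast, ← sum_card_filter_lt_add_sum_card_filter_lt h, pow_add]
  linear_combination
    -((-1 : ℚ) ^ ∑ i' ∈ I', #(I.filter (· < i'))) * hsq (∑ i ∈ I, #(I'.filter (· < i)))

lemma neg_one_zpow_eq_of_even_sub {α : Type*} [DivisionRing α] {a b : ℤ} (h : Even (a - b)) :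
    (-1 : α) ^ a = (-1) ^ b := by
  rw [← sub_add_cancel a b, zpow_add₀ (neg_ne_zero.mpr one_ne_zero), h.neg_one_zpow, one_mul]

/-- graded commutativity of the product of the Deligne–Morgan
model.  Abstract setting: for each finite `I ⊆ ℕ` a graded-commutative
ℚ-algebra `R I` with grading `G I`, with grading-preserving restriction
algebra maps `ρ I J : R I → R J` for `I ⊆ J`.  An element `x` of bidegree
`(n, q)` is an element of `G I (2n - q)` with `|I| = q - n`.  For disjoint
`I, I'`, the product is
`μ(x ⊗ x') = (-1)^{(q-n)q'} sgn(I,I') · ρ x · ρ x'` computed in `R (I ∪ I')`.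
Then `μ(x' ⊗ x) = (-1)^{n n'} μ(x ⊗ x')`. -/
theorem stmt_13
    (R : Finset ℕ → Type) [∀ I, Ring (R I)] [∀ I, Algebra ℚ (R I)]
    (G : ∀ I : Finset ℕ, ℤ → Submodule ℚ (R I))
    (hgradedcomm : ∀ (I : Finset ℕ) (m m' : ℤ), ∀ a ∈ G I m, ∀ b ∈ G I m',
      a * b = ((-1 : ℚ) ^ (m * m')) • (b * a))
    (ρ : ∀ I J : Finset ℕ, I ⊆ J → (R I →ₐ[ℚ] R J))
    (hρgrading : ∀ (I J : Finset ℕ) (h : I ⊆ J) (m : ℤ), ∀ a ∈ G I m,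
      ρ I J h a ∈ G J m)
    (I I' : Finset ℕ) (hdisj : Disjoint I I')
    (n q n' q' : ℤ)
    (hcard : (I.card : ℤ) = q - n) (hcard' : (I'.card : ℤ) = q' - n')
    (x : R I) (hx : x ∈ G I (2 * n - q))
    (x' : R I') (hx' : x' ∈ G I' (2 * n' - q')) :
    ((-1 : ℚ) ^ ((q' - n') * q) * shuffleSignQ I' I) •
        (ρ I' (I ∪ I') Finset.subset_union_right x' *
          ρ I (I ∪ I') Finset.subset_union_left x)
      = ((-1 : ℚ) ^ (n * n')) •
        (((-1 : ℚ) ^ ((q - n) * q') * shuffleSignQ I I') •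
          (ρ I (I ∪ I') Finset.subset_union_left x *
            ρ I' (I ∪ I') Finset.subset_union_right x')) := by
  have hmem := hρgrading I (I ∪ I') subset_union_left _ x hx
  have hmem' := hρgrading I' (I ∪ I') subset_union_right _ x' hx'
  rw [hgradedcomm _ _ _ _ hmem' _ hmem, shuffleSignQ_swap hdisj, hcard, hcard', smul_smul,
    smul_smul]
  congr 1
  have hne : (-1 : ℚ) ≠ 0 := neg_ne_zero.mpr one_ne_zero
  have hsign : (-1 : ℚ) ^ ((q' - n') * q + (q - n) * (q' - n') + (2 * n' - q') * (2 * n - q))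
      = (-1) ^ (n * n' + (q - n) * q') :=
    neg_one_zpow_eq_of_even_sub ⟨q * q' - 2 * n' * q - n * q' + 2 * n * n', by ring⟩
  simp only [zpow_add₀ hne] at hsign
  linear_combination shuffleSignQ I I' * hsign
end
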